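/- Let n ≥ 3 and S = Bⁿ the n-fold product of the Boolean semiring. Then every resolving set of Γ₁(S) has cardinality at least n, and hence dim(Γ₁(S)) = n. -/

import Mathlib

/-! The zero vector is adjacent to every other vertex of Γ₁(𝔹ⁿ), so the graph is connected
with all distances at most 2, and for `x ∉ W`, `w ∈ W` the distance `d(x, w)` is 1 or 2
according as `x` and `w` are adjacent. A resolving set `W` thus injects the `2ⁿ - 1 - |W|`
vertices outside it into the subsets of `W`, so `2ⁿ - 1 ≤ 2^|W| + |W|`, which fails for
`|W| < n` once `n ≥ 3`. Conversely the `n` vertices with a single zero coordinate resolve the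
graph, as `x` is adjacent to the one vanishing at `i` exactly when `xᵢ = 0`. -/

/-- `x` is a zero-divisor of the commutative semiring `S`. -/
def IsZD {S : Type*} [CommSemiring S] (x : S) : Prop :=
  ∃ y : S, y ≠ 0 ∧ x * y = 0

/-- The total graph of a commutative semiring: distinct `x, y` are adjacent
iff `x + y` is a zero-divisor. -/
def totalGraph (S : Type*) [CommSemiring S] : SimpleGraph S where
  Adj x y := x ≠ y ∧ IsZD (x + y)
  symm := by
    constructor
    intro x y h
    exact ⟨h.1.symm, by rw [add_comm]; exact h.2⟩
  loopless := by constructor; intro x h; exact h.1 rfl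

/-- The induced subgraph of the total graph on the set of zero-divisors. -/
def gamma1 (S : Type*) [CommSemiring S] : SimpleGraph {x : S // IsZD x} :=
  SimpleGraph.comap Subtype.val (totalGraph S)

/-- A resolving set: distinct vertices have distinct distance vectors to `W`. -/
def IsResolving {V : Type*} (G : SimpleGraph V) (W : Set V) : Prop :=
  ∀ x y : V, (∀ w ∈ W, G.dist x w = G.dist y w) → x = y

/-- The metric dimension: the least cardinality of a resolving set. -/
noncomputable def metricDim {V : Type*} (G : SimpleGraph V) : ℕ :=
  sInf {k | ∃ W : Set V, W.Finite ∧ W.ncard = k ∧ IsResolving G W}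

/-- The Boolean semiring `𝔹 = {0,1}` with `1 + 1 = 1`. -/
inductive BB : Type
  | zero : BB
  | one : BB
deriving DecidableEq

instance : Zero BB := ⟨.zero⟩
instance : One BB := ⟨.one⟩
instance : Add BB := ⟨fun x y => match x, y with | .zero, y => y | .one, _ => .one⟩
instance : Mul BB := ⟨fun x y => match x, y with | .zero, _ => .zero | .one, y => y⟩
instance : Fintype BB := ⟨{.zero, .one}, by intro x; cases x <;> decide⟩

instance : CommSemiring BB where
  add_assoc := by decide
  zero_add := by decide
  add_zero := by decide
  add_comm := by decide
  mul_assoc := by decide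
  one_mul := by decide
  mul_one := by decide
  left_distrib := by decide
  right_distrib := by decide
  zero_mul := by decide
  mul_zero := by decide
  mul_comm := by decide
  nsmul := nsmulRec
  npow := npowRec

namespace SimpleGraph

variable {V : Type*} {G : SimpleGraph V} {v : V}

lemma reachable_of_forall_adj (hv : ∀ x, x ≠ v → G.Adj x v) (x : V) : G.Reachable x v := by
  by_cases hx : x = v
  · exact hx ▸ Reachable.refl x
  · exact (hv x hx).reachable

lemma connected_of_forall_adj (hv : ∀ x, x ≠ v → G.Adj x v) : G.Connected :=
  (connected_iff_exists_forall_reachable G).mpr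
    ⟨v, fun x => (reachable_of_forall_adj hv x).symm⟩

lemma dist_le_two_of_forall_adj (hv : ∀ x, x ≠ v → G.Adj x v) (x y : V) :
    G.dist x y ≤ 2 := by
  by_cases hx : x = v
  · subst hx
    by_cases hy : y = x
    · simp [hy]
    · exact (dist_eq_one_iff_adj.mpr (hv y hy).symm).le.trans (by norm_num)
  by_cases hy : y = v
  · subst hy
    exact (dist_eq_one_iff_adj.mpr (hv x hx)).le.trans (by norm_num)
  exact dist_le ((Walk.nil.cons (hv y hy).symm).cons (hv x hx))

lemma dist_eq_two_of_not_adj (hG : G.Connected) (hdiam : ∀ x y, G.dist x y ≤ 2) {x y : V}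
    (hxy : x ≠ y) (hadj : ¬G.Adj x y) : G.dist x y = 2 := by
  have hpos := hG.pos_dist_of_ne hxy
  have hne : G.dist x y ≠ 1 := mt dist_eq_one_iff_adj.mp hadj
  have := hdiam x y
  omega

lemma dist_eq_dist_iff_adj_iff_adj (hG : G.Connected) (hdiam : ∀ x y, G.dist x y ≤ 2)
    {x y w : V} (hx : x ≠ w) (hy : y ≠ w) :
    G.dist x w = G.dist y w ↔ (G.Adj x w ↔ G.Adj y w) := by
  by_cases hxw : G.Adj x w <;> by_cases hyw : G.Adj y w <;>
    simp only [hxw, hyw, dist_eq_one_iff_adj.mpr, dist_eq_two_of_not_adj hG hdiam hx,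
      dist_eq_two_of_not_adj hG hdiam hy, not_false_eq_true] <;> decide

lemma isResolving_of_adj_iff_adj (hG : G.Connected) (hdiam : ∀ x y, G.dist x y ≤ 2)
    {W : Set V} (h : ∀ x ∉ W, ∀ y ∉ W, (∀ w ∈ W, G.Adj x w ↔ G.Adj y w) → x = y) :
    IsResolving G W := by
  intro x y hxy
  by_cases hx : x ∈ W
  · exact (hG.dist_eq_zero_iff.mp ((hxy x hx).symm.trans dist_self)).symm
  by_cases hy : y ∈ W
  · exact hG.dist_eq_zero_iff.mp ((hxy y hy).trans dist_self)
  refine h x hx y hy fun w hw => ?_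
  exact (dist_eq_dist_iff_adj_iff_adj hG hdiam (ne_of_mem_of_not_mem hw hx).symm
    (ne_of_mem_of_not_mem hw hy).symm).mp (hxy w hw)

lemma card_le_two_pow_ncard_add_ncard [Finite V] (hG : G.Connected)
    (hdiam : ∀ x y, G.dist x y ≤ 2) {W : Set V} (hW : IsResolving G W) :
    Nat.card V ≤ 2 ^ W.ncard + W.ncard := by
  have hinj : Function.Injective fun (x : ↥Wᶜ) (w : ↥W) => G.Adj x w := by
    intro x y hxy
    refine Subtype.ext (hW x y fun w hw => ?_)
    exact (dist_eq_dist_iff_adj_iff_adj hG hdiam (ne_of_mem_of_not_mem hw x.2).symm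
      (ne_of_mem_of_not_mem hw y.2).symm).mpr (Iff.of_eq (congrFun hxy ⟨w, hw⟩))
  have hcompl : Wᶜ.ncard ≤ 2 ^ W.ncard := by
    simpa [Nat.card_fun] using Nat.card_le_card_of_injective _ hinj
  have := Set.ncard_add_ncard_compl W
  omega

end SimpleGraph

namespace BB

instance : Nontrivial BB := ⟨⟨0, 1, by decide⟩⟩

instance : NoZeroDivisors BB :=
  ⟨fun {a b} => by cases a <;> cases b <;> decide⟩

lemma add_eq_zero_iff {a b : BB} : a + b = 0 ↔ a = 0 ∧ b = 0 := by
  cases a <;> cases b <;> decide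

lemma ne_one_iff {a : BB} : a ≠ 1 ↔ a = 0 := by
  cases a <;> decide

lemma eq_iff_eq_zero_iff {a b : BB} : a = b ↔ (a = 0 ↔ b = 0) := by
  cases a <;> cases b <;> decide

lemma natCard_eq : Nat.card BB = 2 := by
  rw [Nat.card_eq_fintype_card]; rfl

end BB

lemma isZD_zero {S : Type*} [CommSemiring S] [Nontrivial S] : IsZD (0 : S) :=
  ⟨1, one_ne_zero, zero_mul 1⟩

lemma Pi.isZD_iff {ι R : Type*} [CommSemiring R] [NoZeroDivisors R] [Nontrivial R]
    (x : ι → R) : IsZD x ↔ ∃ i, x i = 0 := by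
  classical
  constructor
  · rintro ⟨y, hy, hxy⟩
    obtain ⟨i, hi⟩ := Function.ne_iff.mp hy
    exact ⟨i, (mul_eq_zero.mp (congrFun hxy i)).resolve_right hi⟩
  · rintro ⟨i, hi⟩
    refine ⟨Pi.single i 1, by simp, funext fun j => ?_⟩
    by_cases hj : j = i
    · subst hj; simp [hi]
    · simp [hj]

section Gamma1

variable {S : Type*} [CommSemiring S] [Nontrivial S]

lemma gamma1_adj_zero (x : {x : S // IsZD x}) (hx : x ≠ ⟨0, isZD_zero⟩) :
    (gamma1 S).Adj x ⟨0, isZD_zero⟩ :=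
  ⟨fun h => hx (Subtype.ext h), by simpa using x.2⟩

lemma gamma1_connected : (gamma1 S).Connected :=
  SimpleGraph.connected_of_forall_adj gamma1_adj_zero

lemma gamma1_dist_le_two (x y : {x : S // IsZD x}) : (gamma1 S).dist x y ≤ 2 :=
  SimpleGraph.dist_le_two_of_forall_adj gamma1_adj_zero x y

end Gamma1

section BooleanPower

variable {ι : Type*}

lemma gamma1_pi_adj_iff (x y : {x : ι → BB // IsZD x}) :
    (gamma1 (ι → BB)).Adj x y ↔ x ≠ y ∧ ∃ i, x.1 i = 0 ∧ y.1 i = 0 := by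
  change x.1 ≠ y.1 ∧ IsZD (x.1 + y.1) ↔ _
  simp only [Pi.isZD_iff, Pi.add_apply, BB.add_eq_zero_iff, Subtype.val_injective.ne_iff]

lemma isZD_pi_iff_ne_one (x : ι → BB) : IsZD x ↔ x ≠ 1 := by
  simp only [Pi.isZD_iff, Function.ne_iff, Pi.one_apply, BB.ne_one_iff]

lemma natCard_isZD_pi [Finite ι] : Nat.card {x : ι → BB // IsZD x} = 2 ^ Nat.card ι - 1 := by
  have hcompl := Set.ncard_add_ncard_compl {(1 : ι → BB)}
  rw [Set.ncard_singleton, Nat.card_fun, BB.natCard_eq] at hcompl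
  have hZD : Nat.card {x : ι → BB // IsZD x} = ({1}ᶜ : Set (ι → BB)).ncard :=
    (Nat.card_congr (Equiv.subtypeEquivRight isZD_pi_iff_ne_one)).trans
      (Nat.card_coe_set_eq _)
  omega

end BooleanPower

section CoordinateVertices

variable {ι : Type*} [DecidableEq ι]

def coordVertex (i : ι) : {x : ι → BB // IsZD x} :=
  ⟨Function.update 1 i 0, (Pi.isZD_iff _).mpr ⟨i, Function.update_self i 0 1⟩⟩

lemma coordVertex_injective : Function.Injective (coordVertex (ι := ι)) := by
  intro i j h
  by_contra hij
  have := congrFun (congrArg Subtype.val h) i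
  simp [coordVertex, Function.update_of_ne hij] at this

lemma gamma1_adj_coordVertex_iff {i : ι} {x : {x : ι → BB // IsZD x}}
    (hx : x ≠ coordVertex i) :
    (gamma1 (ι → BB)).Adj x (coordVertex i) ↔ x.1 i = 0 := by
  rw [gamma1_pi_adj_iff]
  constructor
  · rintro ⟨-, j, hxj, hj⟩
    obtain rfl : j = i := by
      by_contra hji
      simp [coordVertex, Function.update_of_ne hji] at hj
    exact hxj
  · exact fun hxi => ⟨hx, i, hxi, Function.update_self i 0 1⟩

lemma isResolving_range_coordVertex :
    IsResolving (gamma1 (ι → BB)) (Set.range coordVertex) := by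
  rcases isEmpty_or_nonempty ι with hι | hι
  · exact fun x => ((isZD_pi_iff_ne_one x.1).mp x.2 (Subsingleton.elim _ _)).elim
  refine SimpleGraph.isResolving_of_adj_iff_adj gamma1_connected gamma1_dist_le_two ?_
  intro x hx y hy hxy
  refine Subtype.ext (funext fun i => BB.eq_iff_eq_zero_iff.mpr ?_)
  have hxi : x ≠ coordVertex i := fun h => hx ⟨i, h.symm⟩
  have hyi : y ≠ coordVertex i := fun h => hy ⟨i, h.symm⟩
  rw [← gamma1_adj_coordVertex_iff hxi, ← gamma1_adj_coordVertex_iff hyi]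
  exact hxy _ ⟨i, rfl⟩

lemma ncard_range_coordVertex : (Set.range (coordVertex (ι := ι))).ncard = Nat.card ι := by
  rw [← Nat.card_coe_set_eq, Nat.card_range_of_injective coordVertex_injective]

end CoordinateVertices

lemma add_one_lt_two_pow {m : ℕ} (hm : 2 ≤ m) : m + 1 < 2 ^ m := by
  induction m, hm using Nat.le_induction with
  | base => norm_num
  | succ m _ ih => rw [pow_succ]; omega

lemma two_pow_add_lt_two_pow_sub_one {w n : ℕ} (hn : 3 ≤ n) (hw : w < n) :
    2 ^ w + w < 2 ^ n - 1 := by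
  obtain ⟨m, rfl⟩ : ∃ m, n = m + 1 := ⟨n - 1, by omega⟩
  have h1 : 2 ^ w ≤ 2 ^ m := Nat.pow_le_pow_right two_pos (by omega)
  have h2 := add_one_lt_two_pow (m := m) (by omega)
  rw [pow_succ]
  omega

lemma natCard_le_ncard_of_isResolving {ι : Type*} [Finite ι] (hι : 3 ≤ Nat.card ι)
    {W : Set {x : ι → BB // IsZD x}} (hW : IsResolving (gamma1 (ι → BB)) W) :
    Nat.card ι ≤ W.ncard := by
  have : Nonempty ι := Nat.card_pos_iff.mp (by omega) |>.1
  by_contra! hlt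
  have hcard := SimpleGraph.card_le_two_pow_ncard_add_ncard gamma1_connected
    gamma1_dist_le_two hW
  rw [natCard_isZD_pi] at hcard
  exact (two_pow_add_lt_two_pow_sub_one hι hlt).not_ge hcard

lemma metricDim_eq_of_isResolving {V : Type*} {G : SimpleGraph V} {W : Set V} (hW : W.Finite)
    (hres : IsResolving G W) (hmin : ∀ W', IsResolving G W' → W.ncard ≤ W'.ncard) :
    metricDim G = W.ncard := by
  refine le_antisymm (Nat.sInf_le ⟨W, hW, rfl, hres⟩) (le_csInf ⟨_, W, hW, rfl, hres⟩ ?_)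
  rintro k ⟨W', -, rfl, hres'⟩
  exact hmin W' hres'

theorem stmt11 (n : ℕ) (hn : 3 ≤ n) :
    (∀ W : Set {x : Fin n → BB // IsZD x},
        IsResolving (gamma1 (Fin n → BB)) W → n ≤ W.ncard) ∧
      metricDim (gamma1 (Fin n → BB)) = n := by
  have hlower (W : Set {x : Fin n → BB // IsZD x}) (hW : IsResolving (gamma1 (Fin n → BB)) W) :
      n ≤ W.ncard := by
    simpa using natCard_le_ncard_of_isResolving (by simpa using hn) hW
  refine ⟨hlower, ?_⟩
  have hdim := metricDim_eq_of_isResolving (Set.toFinite _) isResolving_range_coordVertex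
    fun W hW => (ncard_range_coordVertex (ι := Fin n)).trans_le (by simpa using hlower W hW)
  rwa [ncard_range_coordVertex, Nat.card_fin] at hdim
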